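/- Let G be a finite simple graph with n vertices and m edges. Then for every j ≥ 1, the (j, j+1) graded Betti number of S/I over the edge ideal I of the complement of BL(G) equals m*binom(m+n−3, j) − binom(m, j+1). -/

import Mathlib

/-!
Let `W` be a set of vertices of `BL(G)`. The original vertices in `W` form a clique, and every
edge-vertex of `W` with an endpoint in `W` hangs off that clique; the remaining edge-vertices of `W`
("stranded" ones) are isolated. So `BL(G)[W]` has one component per stranded edge-vertex, plus one
if `W` contains an original vertex. Summed over `W` with `|W| = j + 1`, an edge `e = uv` is
stranded in exactly `binom(n + m - 3, j)` sets (those containing `e` but not `u`, `v`), and the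
sets without original vertices are the `binom(m, j + 1)` sets of edges.
-/

/-- The Booth–Lueker graph of `G`: vertex set `V(G) ⊕ E(G)`, with all pairs of distinct
original vertices adjacent, and each edge-vertex `e` adjacent to the endpoints of `e`. -/
def BoothLueker {V : Type*} (G : SimpleGraph V) : SimpleGraph (V ⊕ G.edgeSet) where
  Adj x y :=
    match x, y with
    | Sum.inl u, Sum.inl v => u ≠ v
    | Sum.inl u, Sum.inr e => u ∈ (e : Sym2 V)
    | Sum.inr e, Sum.inl u => u ∈ (e : Sym2 V)
    | Sum.inr _, Sum.inr _ => False
  symm := ⟨by rintro (u | e) (v | f) h <;> simp_all <;> exact Ne.symm h⟩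
  loopless := ⟨by rintro (u | e) h <;> simp_all⟩

open Finset

namespace SimpleGraph

variable {α : Type*}

theorem Reachable.eq_of_forall_not_adj {H : SimpleGraph α} {x y : α} (hxy : H.Reachable x y)
    (hx : ∀ z, ¬ H.Adj x z) : x = y := by
  obtain ⟨_ | ⟨hadj, _⟩⟩ := hxy
  · rfl
  · exact absurd hadj (hx _)

theorem natCard_connectedComponent_eq [Finite α] (H : SimpleGraph α) (p : α → Prop)
    [Decidable (∃ x, p x)] (hp : ∀ x y, H.Adj x y → p x)
    (hreach : ∀ x y, p x → p y → H.Reachable x y) :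
    Nat.card H.ConnectedComponent = Nat.card {x // ¬ p x} + if ∃ x, p x then 1 else 0 := by
  have hstuck {x y : α} (hx : ¬ p x) (hxy : H.Reachable x y) : x = y :=
    hxy.eq_of_forall_not_adj fun z h => hx (hp x z h)
  let f : {x // ¬ p x} ⊕ PLift (∃ x, p x) → H.ConnectedComponent :=
    Sum.elim (fun x => H.connectedComponentMk x) (fun h => H.connectedComponentMk h.down.choose)
  have hf : f.Bijective := by
    constructor
    · rintro (⟨x, hx⟩ | h) (⟨y, hy⟩ | h') hxy <;>
        simp only [f, Sum.elim_inl, Sum.elim_inr, ConnectedComponent.eq] at hxy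
      · obtain rfl := hstuck hx hxy
        rfl
      · exact absurd (hstuck hx hxy ▸ h'.down.choose_spec) hx
      · exact absurd (hstuck hy hxy.symm ▸ h.down.choose_spec) hy
      · rw [Subsingleton.elim h h']
    · refine ConnectedComponent.ind fun x => ?_
      by_cases hx : p x
      · exact ⟨.inr ⟨⟨x, hx⟩⟩,
          ConnectedComponent.sound (hreach _ _ (Exists.choose_spec _) hx)⟩
      · exact ⟨.inl ⟨x, hx⟩, rfl⟩
  rw [← Nat.card_congr (Equiv.ofBijective f hf), Nat.card_sum]
  split_ifs with h <;> simp [h]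

end SimpleGraph

namespace Finset

variable {α : Type*} [DecidableEq α]

theorem powersetCard_filter_disjoint (k : ℕ) (s t : Finset α) :
    {W ∈ powersetCard k s | Disjoint t W} = powersetCard k (s \ t) := by
  ext W
  simp only [mem_filter, mem_powersetCard, subset_sdiff, disjoint_comm]
  tauto

theorem card_powersetCard_filter_mem {a : α} {s : Finset α} (ha : a ∈ s) (k : ℕ) :
    #{W ∈ powersetCard (k + 1) s | a ∈ W} = (#s - 1).choose k := by
  have hnot : #{W ∈ powersetCard (k + 1) s | a ∉ W} = (#s - 1).choose (k + 1) := by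
    simp_rw [← disjoint_singleton_left, powersetCard_filter_disjoint, card_powersetCard,
      card_sdiff_of_subset (singleton_subset_iff.2 ha), card_singleton]
  have hpos : #s = #s - 1 + 1 := (Nat.sub_add_cancel (card_pos.2 ⟨a, ha⟩)).symm
  have hall := card_filter_add_card_filter_not (s := powersetCard (k + 1) s) (a ∈ ·)
  rw [hnot, card_powersetCard, hpos, Nat.choose_succ_succ', Nat.add_sub_cancel] at hall
  omega

end Finset

namespace BoothLueker

variable {V : Type*} {G : SimpleGraph V}

@[simp] theorem adj_inl_inl {u v : V} : (BoothLueker G).Adj (.inl u) (.inl v) ↔ u ≠ v := .rfl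

@[simp] theorem adj_inr_inl {u : V} {e : G.edgeSet} :
    (BoothLueker G).Adj (.inr e) (.inl u) ↔ u ∈ (e : Sym2 V) := .rfl

@[simp] theorem not_adj_inr_inr {e f : G.edgeSet} : ¬ (BoothLueker G).Adj (.inr e) (.inr f) :=
  id

def IsStranded (W : Finset (V ⊕ G.edgeSet)) : V ⊕ G.edgeSet → Prop
  | .inl _ => False
  | .inr e => ∀ u ∈ (e : Sym2 V), .inl u ∉ W

instance [Fintype V] [DecidableEq V] (W : Finset (V ⊕ G.edgeSet)) : DecidablePred (IsStranded W)
  | .inl _ => inferInstanceAs (Decidable False)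
  | .inr e => inferInstanceAs (Decidable (∀ u ∈ (e : Sym2 V), .inl u ∉ W))

variable {W : Finset (V ⊕ G.edgeSet)}

theorem not_isStranded_of_adj {x y : V ⊕ G.edgeSet} (hy : y ∈ W) (h : (BoothLueker G).Adj x y) :
    ¬ IsStranded W x := by
  rcases x with u | e <;> rcases y with v | f
  · exact id
  · exact id
  · exact fun hx => hx v h hy
  · exact absurd h not_adj_inr_inr

theorem reachable_inl_inl {u v : V} (hu : .inl u ∈ W) (hv : .inl v ∈ W) :
    ((BoothLueker G).induce W).Reachable ⟨.inl u, hu⟩ ⟨.inl v, hv⟩ := by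
  obtain rfl | huv := eq_or_ne u v
  · rfl
  · exact (SimpleGraph.induce_adj.2 (adj_inl_inl.2 huv)).reachable

theorem exists_reachable_inl {x : V ⊕ G.edgeSet} (hxW : x ∈ W) (hx : ¬ IsStranded W x) :
    ∃ u, ∃ hu : .inl u ∈ W,
      ((BoothLueker G).induce W).Reachable ⟨x, hxW⟩ ⟨.inl u, hu⟩ := by
  rcases x with u | e
  · exact ⟨u, hxW, .rfl⟩
  · simp only [IsStranded, not_forall, not_not] at hx
    obtain ⟨u, hue, hu⟩ := hx
    exact ⟨u, hu, (SimpleGraph.induce_adj.2 (adj_inr_inl.2 hue)).reachable⟩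

theorem natCard_connectedComponent_induce [Fintype V] [DecidableEq V]
    (W : Finset (V ⊕ G.edgeSet)) :
    Nat.card ((BoothLueker G).induce W).ConnectedComponent =
      #{x ∈ W | IsStranded W x} + if ∃ u, .inl u ∈ W then 1 else 0 := by
  classical
  have hreach (x y : (W : Set (V ⊕ G.edgeSet))) (hx : ¬ IsStranded W x)
      (hy : ¬ IsStranded W y) : ((BoothLueker G).induce W).Reachable x y := by
    obtain ⟨u, hu, hxu⟩ := exists_reachable_inl x.2 hx
    obtain ⟨v, hv, hyv⟩ := exists_reachable_inl y.2 hy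
    exact hxu.trans ((reachable_inl_inl hu hv).trans hyv.symm)
  have hcore : (∃ x : (W : Set (V ⊕ G.edgeSet)), ¬ IsStranded W x) ↔ ∃ u, .inl u ∈ W :=
    ⟨fun ⟨x, hx⟩ => (exists_reachable_inl x.2 hx).imp fun _ h => h.1,
      fun ⟨u, hu⟩ => ⟨⟨.inl u, hu⟩, id⟩⟩
  rw [SimpleGraph.natCard_connectedComponent_eq _
    (fun x : (W : Set (V ⊕ G.edgeSet)) => ¬ IsStranded W x)
    (fun x y h => not_isStranded_of_adj y.2 h) hreach]
  simp only [not_not, hcore]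
  rw [Nat.card_congr (Equiv.subtypeSubtypeEquivSubtypeInter _ _), Nat.card_eq_fintype_card,
    Fintype.card_subtype]
  congr 2
  ext
  simp

variable [Fintype V] [DecidableEq V] [DecidableRel G.Adj]

theorem card_filter_isStranded_inr (e : G.edgeSet) (k : ℕ) :
    #{W ∈ powersetCard (k + 1) (univ : Finset (V ⊕ G.edgeSet)) |
        .inr e ∈ W ∧ IsStranded W (.inr e)} =
      (Fintype.card (V ⊕ G.edgeSet) - 3).choose k := by
  obtain ⟨e, he⟩ := e
  induction e using Sym2.ind with | _ u v =>
  let B : Finset (V ⊕ G.edgeSet) := {.inl u, .inl v}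
  have hB : #B = 2 := card_pair (by simpa using G.ne_of_adj he)
  have heB : .inr ⟨s(u, v), he⟩ ∈ univ \ B := by simp [B]
  have hstranded (W : Finset (V ⊕ G.edgeSet)) :
      IsStranded W (.inr ⟨s(u, v), he⟩) ↔ Disjoint B W := by
    simp [IsStranded, B]
  simp_rw [hstranded, and_comm (a := _ ∈ _), ← filter_filter, powersetCard_filter_disjoint,
    card_powersetCard_filter_mem heB,
    card_sdiff_of_subset (subset_univ B), card_univ, hB, Nat.sub_sub]

theorem sum_card_filter_isStranded (k : ℕ) :
    ∑ W ∈ powersetCard (k + 1) (univ : Finset (V ⊕ G.edgeSet)), #{x ∈ W | IsStranded W x} =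
      Fintype.card G.edgeSet * (Fintype.card (V ⊕ G.edgeSet) - 3).choose k := by
  have hcount (W : Finset (V ⊕ G.edgeSet)) : #{x ∈ W | IsStranded W x} =
      #(univ.bipartiteAbove (fun W x => x ∈ W ∧ IsStranded W x) W) := by
    rw [bipartiteAbove, filter_and, filter_mem_eq_inter, univ_inter, inter_filter, inter_univ]
  simp_rw [hcount, sum_card_bipartiteAbove_eq_sum_card_bipartiteBelow, Fintype.sum_sum_type,
    bipartiteBelow, card_filter_isStranded_inr]
  simp [IsStranded]

theorem card_filter_forall_inl_notMem (k : ℕ) :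
    #{W ∈ powersetCard k (univ : Finset (V ⊕ G.edgeSet)) | ∀ u, .inl u ∉ W} =
      (Fintype.card G.edgeSet).choose k := by
  have hdisj (W : Finset (V ⊕ G.edgeSet)) :
      (∀ u, .inl u ∉ W) ↔ Disjoint (univ.map .inl) W := by
    simp [disjoint_left]
  simp_rw [hdisj, powersetCard_filter_disjoint, card_powersetCard,
    card_sdiff_of_subset (subset_univ _), card_univ, card_map, Fintype.card_sum, card_univ,
    Nat.add_sub_cancel_left]

end BoothLueker

theorem betti_compl_boothLueker_general {V : Type*} [Fintype V]
    (G : SimpleGraph V) [DecidableRel G.Adj]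
    (n m : ℕ) (hn : n = Fintype.card V) (hm : m = G.edgeFinset.card)
    (j : ℕ) :
    ∑ W ∈ Finset.powersetCard (j + 1) (Finset.univ : Finset (V ⊕ G.edgeSet)),
        ((Nat.card (SimpleGraph.induce (↑W) (BoothLueker G)).ConnectedComponent : ℤ) - 1)
      = (m : ℤ) * ((m + n - 3).choose j : ℤ) - (m.choose (j + 1) : ℤ) := by
  classical
  have hm' : m = Fintype.card G.edgeSet := by rw [hm, SimpleGraph.edgeFinset_card]
  have hN : Fintype.card (V ⊕ G.edgeSet) - 3 = m + n - 3 := by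
    rw [Fintype.card_sum, hn, hm', add_comm]
  have hsummand (W : Finset (V ⊕ G.edgeSet)) :
      (Nat.card ((BoothLueker G).induce W).ConnectedComponent : ℤ) - 1 =
        #{x ∈ W | BoothLueker.IsStranded W x} - if ∀ u, .inl u ∉ W then 1 else 0 := by
    simp only [BoothLueker.natCard_connectedComponent_induce, ← not_exists]
    split_ifs <;> simp
  rw [sum_congr rfl fun W _ => hsummand W, sum_sub_distrib, ← Nat.cast_sum,
    BoothLueker.sum_card_filter_isStranded, sum_boole,
    BoothLueker.card_filter_forall_inl_notMem, hN, hm']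
  push_cast
  rfl

/-- For a graph `G` with `n` vertices and `m` edges, the graded Betti numbers of the
edge ideal of the complement of `BL(G)` (computed, via the
Fröberg/Dochtermann–Engström formula, as a sum over `(j+1)`-subsets `W` of the number of
connected components of `BL(G)[W]` minus one) satisfy
`β_{j,j+1} = m·binom(m+n−3, j) − binom(m, j+1)` for every `j ≥ 1`. -/
theorem betti_compl_boothLueker {V : Type*} [Fintype V] [DecidableEq V]
    (G : SimpleGraph V) [DecidableRel G.Adj]
    (n m : ℕ) (hn : n = Fintype.card V) (hm : m = G.edgeFinset.card)
    (j : ℕ) (hj : 1 ≤ j) :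
    ∑ W ∈ Finset.powersetCard (j + 1) (Finset.univ : Finset (V ⊕ G.edgeSet)),
        ((Nat.card (SimpleGraph.induce (↑W) (BoothLueker G)).ConnectedComponent : ℤ) - 1)
      = (m : ℤ) * ((m + n - 3).choose j : ℤ) - (m.choose (j + 1) : ℤ) :=
  betti_compl_boothLueker_general G n m hn hm j
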